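/- Let F : C → D be a symmetric monoidal functor between symmetric monoidal categories with a right adjoint G. If N is a dualizable object of C, then for every object M of D there is a natural isomorphism G(M) ⊗ N ≅ G(M ⊗ F(N)). -/

import Mathlib

/-!
By Yoneda it suffices to identify the left adjoints of the two functors. The braiding makes
`N^∨` a left dual of `N` as well, so the left adjoint of `G(-) ⊗ N` is `F(- ⊗ N^∨)`, and that of `G(- ⊗ F N)` is `F(-) ⊗ F(N^∨)`, since a strong monoidal
functor carries the duality between `N^∨` and `N` to one between `F(N^∨)` and `F(N)`. The
tensorator `F(L) ⊗ F(N^∨) ≅ F(L ⊗ N^∨)` identifies the two left adjoints.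
-/

open CategoryTheory MonoidalCategory Functor.LaxMonoidal Functor.OplaxMonoidal

namespace CategoryTheory

universe v₁ v₂ u₁ u₂

variable {C : Type u₁} {D : Type u₂} [Category.{v₁} C] [Category.{v₂} D]
  [MonoidalCategory C] [MonoidalCategory D]

/-- Each zigzag identity is the image under `F` of the one in `C`, with the tensorators
cancelled. -/
abbrev Functor.Monoidal.mapExactPairing (F : C ⥤ D) [F.Monoidal] (X Y : C) [ExactPairing X Y] :
    ExactPairing (F.obj X) (F.obj Y) where
  coevaluation' := ε F ≫ F.map (η_ X Y) ≫ δ F X Y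
  evaluation' := μ F Y X ≫ F.map (ε_ X Y) ≫ η F
  coevaluation_evaluation' := by
    have h := congrArg F.map (ExactPairing.coevaluation_evaluation X Y)
    simp only [F.map_comp, Functor.Monoidal.map_whiskerLeft, Functor.Monoidal.map_associator_inv,
      Functor.Monoidal.map_whiskerRight, Functor.Monoidal.map_rightUnitor,
      Functor.Monoidal.map_leftUnitor_inv, Category.assoc, Functor.Monoidal.μ_δ_assoc,
      cancel_epi] at h
    simp only [← Category.assoc, cancel_mono] at h
    simp only [MonoidalCategory.whiskerLeft_comp, comp_whiskerRight, Category.assoc] at h ⊢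
    rw [reassoc_of% h]
    simp
  evaluation_coevaluation' := by
    have h := congrArg F.map (ExactPairing.evaluation_coevaluation X Y)
    simp only [F.map_comp, Functor.Monoidal.map_whiskerLeft, Functor.Monoidal.map_associator,
      Functor.Monoidal.map_whiskerRight, Functor.Monoidal.map_leftUnitor,
      Functor.Monoidal.map_rightUnitor_inv, Category.assoc, Functor.Monoidal.μ_δ_assoc,
      cancel_epi] at h
    simp only [← Category.assoc, cancel_mono] at h
    simp only [MonoidalCategory.whiskerLeft_comp, comp_whiskerRight, Category.assoc] at h ⊢
    rw [reassoc_of% h]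
    simp

def Adjunction.tensorRightIsoOfExactPairing {F : C ⥤ D} [F.Monoidal] {G : D ⥤ C} (adj : F ⊣ G)
    (Y X : C) [ExactPairing Y X] : G ⋙ tensorRight X ≅ tensorRight (F.obj X) ⋙ G :=
  letI := Functor.Monoidal.mapExactPairing F Y X
  ((tensorRightAdjunction Y X).comp adj).rightAdjointUniq
    ((adj.comp (tensorRightAdjunction (F.obj Y) (F.obj X))).ofNatIsoLeft
      (Functor.Monoidal.commTensorRight F Y))

end CategoryTheory

/-- Projection formula: let `F : C ⥤ D` be a symmetric monoidal functor between symmetric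
monoidal categories with a right adjoint `G`.  If `N` is a dualizable object of `C`, then
there is a natural isomorphism `G(M) ⊗ N ≅ G(M ⊗ F(N))` (stated as an isomorphism of
functors in `M`). -/
theorem projection_formula_of_dualizable
    {C D : Type*} [Category C] [Category D]
    [MonoidalCategory C] [SymmetricCategory C]
    [MonoidalCategory D] [SymmetricCategory D]
    (F : C ⥤ D) [F.Braided] (G : D ⥤ C) (adj : F ⊣ G)
    (N : C) [HasRightDual N] :
    Nonempty ((G ⋙ tensorRight N) ≅ (tensorRight (F.obj N) ⋙ G)) :=
  letI := BraidedCategory.exactPairing_swap N Nᘁ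
  ⟨adj.tensorRightIsoOfExactPairing Nᘁ N⟩
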